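/- Let M be a 6×6 skew-symmetric matrix over R all of whose entries are linear forms, and suppose Pf(M) = 0. Let F ∈ R be a cubic. Then the following are equivalent: (i) there exists a 6×6 skew-symmetric matrix M₁ over R all of whose entries are linear forms such that Pf(M + εM₁) = ε·F in R[ε]/(ε²); (ii) F belongs to the sub-Pfaffian ideal I₄(M). -/
import Mathlib

open MvPolynomial Matrix

noncomputable section

/-- The polynomial ring `R = ℂ[x₀,…,x₄]`. -/
abbrev Rp : Type := MvPolynomial (Fin 5) ℂ

/-- The sub-Pfaffian `q_{αβ}(N)` of a `6 × 6` matrix: for `α < β` it is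
`N_{ij}N_{kl} − N_{ik}N_{jl} + N_{il}N_{jk}` where `i < j < k < l` are the elements of
`{0,…,5} ∖ {α,β}`. -/
def subPf {A : Type*} [CommRing A] (N : Matrix (Fin 6) (Fin 6) A) (α β : Fin 6) : A :=
  match (List.finRange 6).filter (fun i => decide (i ≠ α) && decide (i ≠ β)) with
  | [i, j, k, m] => N i j * N k m - N i k * N j m + N i m * N j k
  | _ => 0

/-- The Pfaffian of a `6 × 6` skew-symmetric matrix. -/
def pf {A : Type*} [CommRing A] (N : Matrix (Fin 6) (Fin 6) A) : A :=
  N 0 1 * subPf N 0 1 - N 0 2 * subPf N 0 2 + N 0 3 * subPf N 0 3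
    - N 0 4 * subPf N 0 4 + N 0 5 * subPf N 0 5

/-- The sub-Pfaffian ideal `I₄(N)`, generated by the fifteen sub-Pfaffians. -/
def pfIdeal4 {A : Type*} [CommRing A] (N : Matrix (Fin 6) (Fin 6) A) : Ideal A :=
  Ideal.span {x | ∃ α β : Fin 6, α < β ∧ x = subPf N α β}

/-- The matrix `M + ε M₁` over `R[ε]/(ε²)`, realised via dual numbers. -/
def jet1 (M M₁ : Matrix (Fin 6) (Fin 6) Rp) : Matrix (Fin 6) (Fin 6) (DualNumber Rp) :=
  Matrix.of fun i j =>
    TrivSqZeroExt.inl (M i j) + DualNumber.eps * TrivSqZeroExt.inl (M₁ i j)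

/-! ### Auxiliary material -/

theorem pf_expand {A : Type*} [CommRing A] (N : Matrix (Fin 6) (Fin 6) A) :
    pf N = N 0 1 * (N 2 3 * N 4 5 - N 2 4 * N 3 5 + N 2 5 * N 3 4)
      - N 0 2 * (N 1 3 * N 4 5 - N 1 4 * N 3 5 + N 1 5 * N 3 4)
      + N 0 3 * (N 1 2 * N 4 5 - N 1 4 * N 2 5 + N 1 5 * N 2 4)
      - N 0 4 * (N 1 2 * N 3 5 - N 1 3 * N 2 5 + N 1 5 * N 2 3)
      + N 0 5 * (N 1 2 * N 3 4 - N 1 3 * N 2 4 + N 1 4 * N 2 3) := rfl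

theorem jet1_apply (M M₁ : Matrix (Fin 6) (Fin 6) Rp) (i j : Fin 6) :
    jet1 M M₁ i j = TrivSqZeroExt.inl (M i j) + DualNumber.eps * TrivSqZeroExt.inl (M₁ i j) := rfl

def Dder (M M₁ : Matrix (Fin 6) (Fin 6) Rp) : Rp :=
  0 + M₁ 0 1 * subPf M 0 1 - M₁ 0 2 * subPf M 0 2 + M₁ 0 3 * subPf M 0 3 - M₁ 0 4 * subPf M 0 4 + M₁ 0 5 * subPf M 0 5 + M₁ 1 2 * subPf M 1 2 - M₁ 1 3 * subPf M 1 3 + M₁ 1 4 * subPf M 1 4 - M₁ 1 5 * subPf M 1 5 + M₁ 2 3 * subPf M 2 3 - M₁ 2 4 * subPf M 2 4 + M₁ 2 5 * subPf M 2 5 + M₁ 3 4 * subPf M 3 4 - M₁ 3 5 * subPf M 3 5 + M₁ 4 5 * subPf M 4 5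

theorem Dder_expand (M M₁ : Matrix (Fin 6) (Fin 6) Rp) :
    Dder M M₁ = 0
      + M₁ 0 1 * (M 2 3 * M 4 5 - M 2 4 * M 3 5 + M 2 5 * M 3 4)
      - M₁ 0 2 * (M 1 3 * M 4 5 - M 1 4 * M 3 5 + M 1 5 * M 3 4)
      + M₁ 0 3 * (M 1 2 * M 4 5 - M 1 4 * M 2 5 + M 1 5 * M 2 4)
      - M₁ 0 4 * (M 1 2 * M 3 5 - M 1 3 * M 2 5 + M 1 5 * M 2 3)
      + M₁ 0 5 * (M 1 2 * M 3 4 - M 1 3 * M 2 4 + M 1 4 * M 2 3)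
      + M₁ 1 2 * (M 0 3 * M 4 5 - M 0 4 * M 3 5 + M 0 5 * M 3 4)
      - M₁ 1 3 * (M 0 2 * M 4 5 - M 0 4 * M 2 5 + M 0 5 * M 2 4)
      + M₁ 1 4 * (M 0 2 * M 3 5 - M 0 3 * M 2 5 + M 0 5 * M 2 3)
      - M₁ 1 5 * (M 0 2 * M 3 4 - M 0 3 * M 2 4 + M 0 4 * M 2 3)
      + M₁ 2 3 * (M 0 1 * M 4 5 - M 0 4 * M 1 5 + M 0 5 * M 1 4)
      - M₁ 2 4 * (M 0 1 * M 3 5 - M 0 3 * M 1 5 + M 0 5 * M 1 3)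
      + M₁ 2 5 * (M 0 1 * M 3 4 - M 0 3 * M 1 4 + M 0 4 * M 1 3)
      + M₁ 3 4 * (M 0 1 * M 2 5 - M 0 2 * M 1 5 + M 0 5 * M 1 2)
      - M₁ 3 5 * (M 0 1 * M 2 4 - M 0 2 * M 1 4 + M 0 4 * M 1 2)
      + M₁ 4 5 * (M 0 1 * M 2 3 - M 0 2 * M 1 3 + M 0 3 * M 1 2) := rfl

def mkM₁ (A : Fin 6 → Fin 6 → Rp) : Matrix (Fin 6) (Fin 6) Rp :=
  Matrix.of ![
    ![ 0, A 0 1, -A 0 2, A 0 3, -A 0 4, A 0 5 ],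
    ![ -A 0 1, 0, A 1 2, -A 1 3, A 1 4, -A 1 5 ],
    ![ A 0 2, -A 1 2, 0, A 2 3, -A 2 4, A 2 5 ],
    ![ -A 0 3, A 1 3, -A 2 3, 0, A 3 4, -A 3 5 ],
    ![ A 0 4, -A 1 4, A 2 4, -A 3 4, 0, A 4 5 ],
    ![ -A 0 5, A 1 5, -A 2 5, A 3 5, -A 4 5, 0 ] ]

theorem Dder_mk (M : Matrix (Fin 6) (Fin 6) Rp) (A : Fin 6 → Fin 6 → Rp) :
    Dder M (mkM₁ A) = A 0 1 * subPf M 0 1 + A 0 2 * subPf M 0 2 + A 0 3 * subPf M 0 3 + A 0 4 * subPf M 0 4 + A 0 5 * subPf M 0 5 + A 1 2 * subPf M 1 2 + A 1 3 * subPf M 1 3 + A 1 4 * subPf M 1 4 + A 1 5 * subPf M 1 5 + A 2 3 * subPf M 2 3 + A 2 4 * subPf M 2 4 + A 2 5 * subPf M 2 5 + A 3 4 * subPf M 3 4 + A 3 5 * subPf M 3 5 + A 4 5 * subPf M 4 5 := by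
  show (0 + A 0 1 * subPf M 0 1 - (-A 0 2) * subPf M 0 2 + A 0 3 * subPf M 0 3 - (-A 0 4) * subPf M 0 4 + A 0 5 * subPf M 0 5 + A 1 2 * subPf M 1 2 - (-A 1 3) * subPf M 1 3 + A 1 4 * subPf M 1 4 - (-A 1 5) * subPf M 1 5 + A 2 3 * subPf M 2 3 - (-A 2 4) * subPf M 2 4 + A 2 5 * subPf M 2 5 + A 3 4 * subPf M 3 4 - (-A 3 5) * subPf M 3 5 + A 4 5 * subPf M 4 5 : Rp) = _
  ring

theorem mkM₁_skew (A : Fin 6 → Fin 6 → Rp) : (mkM₁ A)ᵀ = -(mkM₁ A) := by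
  refine Matrix.ext fun i j => ?_
  rw [Matrix.transpose_apply, Matrix.neg_apply]
  fin_cases i <;> fin_cases j <;>
    first
      | rfl
      | exact (neg_neg _).symm
      | exact neg_zero.symm

theorem mkM₁_hom (A : Fin 6 → Fin 6 → Rp) (hA : ∀ a b, (A a b).IsHomogeneous 1) :
    ∀ i j, ((mkM₁ A) i j).IsHomogeneous 1 := by
  intro i j
  fin_cases i <;> fin_cases j <;>
    first
      | exact isHomogeneous_zero _ _ _
      | exact hA _ _
      | exact (hA _ _).neg

set_option maxHeartbeats 1000000 in
/-- First-order expansion of the Pfaffian. -/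
theorem pfA (M M₁ : Matrix (Fin 6) (Fin 6) Rp) :
    pf (jet1 M M₁) = TrivSqZeroExt.inl (pf M) + DualNumber.eps * TrivSqZeroExt.inl (Dder M M₁) := by
  rw [pf_expand, pf_expand, Dder_expand]
  simp only [jet1_apply]
  apply TrivSqZeroExt.ext <;>
  · simp only [TrivSqZeroExt.fst_add, TrivSqZeroExt.fst_mul, TrivSqZeroExt.fst_sub,
      TrivSqZeroExt.fst_inl, DualNumber.fst_eps, TrivSqZeroExt.snd_add, TrivSqZeroExt.snd_mul,
      TrivSqZeroExt.snd_sub, TrivSqZeroExt.snd_inl, DualNumber.snd_eps, smul_eq_mul,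
      MulOpposite.smul_eq_mul_unop, MulOpposite.unop_op]
    ring

theorem subPf_hom (M : Matrix (Fin 6) (Fin 6) Rp) (hlin : ∀ i j, (M i j).IsHomogeneous 1)
    (a b : Fin 6) : (subPf M a b).IsHomogeneous 2 := by
  fin_cases a <;> fin_cases b <;>
    first
      | exact isHomogeneous_zero _ _ _
      | exact (((hlin _ _).mul (hlin _ _)).sub ((hlin _ _).mul (hlin _ _))).add
          ((hlin _ _).mul (hlin _ _))

theorem hc_mul (p q : Rp) (hq : q.IsHomogeneous 2) :
    homogeneousComponent 3 (p * q) = homogeneousComponent 1 p * q := by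
  have key : ∀ i : ℕ, homogeneousComponent 3 (homogeneousComponent i p * q)
      = if 1 = i then homogeneousComponent 1 p * q else 0 := by
    intro i
    have hh : (homogeneousComponent i p * q).IsHomogeneous (i + 2) :=
      (homogeneousComponent_isHomogeneous i p).mul hq
    rw [homogeneousComponent_of_mem hh]
    by_cases hi : 1 = i
    · subst hi; simp
    · rw [if_neg (by omega), if_neg hi]
  conv_lhs => rw [← sum_homogeneousComponent p, Finset.sum_mul, map_sum]
  rw [Finset.sum_congr rfl fun i _ => key i, Finset.sum_ite_eq]
  by_cases h1 : 1 ∈ Finset.range (p.totalDegree + 1)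
  · rw [if_pos h1]
  · have h0 : homogeneousComponent 1 p = 0 := by
      apply homogeneousComponent_eq_zero
      simp only [Finset.mem_range] at h1
      omega
    rw [if_neg h1, h0, zero_mul]

def gfun (M : Matrix (Fin 6) (Fin 6) Rp) : Fin 6 × Fin 6 → Rp :=
  fun p => if p.1 < p.2 then subPf M p.1 p.2 else 0

theorem span_gfun (M : Matrix (Fin 6) (Fin 6) Rp) :
    pfIdeal4 M = Ideal.span (Set.range (gfun M)) := by
  apply le_antisymm <;> rw [pfIdeal4, Ideal.span_le]
  · rintro x ⟨a, b, hab, rfl⟩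
    exact Ideal.subset_span ⟨(a, b), by simp [gfun, hab]⟩
  · rintro x ⟨⟨a, b⟩, rfl⟩
    by_cases hab : a < b
    · simp only [gfun, if_pos hab]
      exact Ideal.subset_span ⟨a, b, hab, rfl⟩
    · simp only [gfun, if_neg hab]
      exact Submodule.zero_mem _

/-- First-order Pfaffian deformations of a skew matrix with vanishing Pfaffian realise
exactly the cubics in the sub-Pfaffian ideal `I₄(M)` (cf. Propositions 2.12 and 2.13,
Case 1, of the paper). -/
theorem first_order_pfaffian_representation
    (M : Matrix (Fin 6) (Fin 6) Rp) (hskew : Mᵀ = -M)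
    (hlin : ∀ i j, (M i j).IsHomogeneous 1) (hpf : pf M = 0)
    (F : Rp) (hF : F.IsHomogeneous 3) :
    (∃ M₁ : Matrix (Fin 6) (Fin 6) Rp, M₁ᵀ = -M₁ ∧ (∀ i j, (M₁ i j).IsHomogeneous 1) ∧
      pf (jet1 M M₁) = DualNumber.eps * TrivSqZeroExt.inl F) ↔
    F ∈ pfIdeal4 M := by
  have hq : ∀ a b : Fin 6, a < b → subPf M a b ∈ pfIdeal4 M :=
    fun a b h => Ideal.subset_span ⟨a, b, h, rfl⟩
  constructor
  · rintro ⟨M₁, -, -, h3⟩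
    rw [pfA, hpf, TrivSqZeroExt.inl_zero, zero_add] at h3
    have hDF : Dder M M₁ = F := by
      have := congrArg TrivSqZeroExt.snd h3
      simpa using this
    rw [← hDF]
    exact add_mem
      (sub_mem
      (add_mem
      (add_mem
      (sub_mem
      (add_mem
      (sub_mem
      (add_mem
      (sub_mem
      (add_mem
      (add_mem
      (sub_mem
      (add_mem
      (sub_mem
      (add_mem
      (Submodule.zero_mem _)
      (Ideal.mul_mem_left _ _ (hq 0 1 (by decide))))
      (Ideal.mul_mem_left _ _ (hq 0 2 (by decide))))
      (Ideal.mul_mem_left _ _ (hq 0 3 (by decide))))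
      (Ideal.mul_mem_left _ _ (hq 0 4 (by decide))))
      (Ideal.mul_mem_left _ _ (hq 0 5 (by decide))))
      (Ideal.mul_mem_left _ _ (hq 1 2 (by decide))))
      (Ideal.mul_mem_left _ _ (hq 1 3 (by decide))))
      (Ideal.mul_mem_left _ _ (hq 1 4 (by decide))))
      (Ideal.mul_mem_left _ _ (hq 1 5 (by decide))))
      (Ideal.mul_mem_left _ _ (hq 2 3 (by decide))))
      (Ideal.mul_mem_left _ _ (hq 2 4 (by decide))))
      (Ideal.mul_mem_left _ _ (hq 2 5 (by decide))))
      (Ideal.mul_mem_left _ _ (hq 3 4 (by decide))))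
      (Ideal.mul_mem_left _ _ (hq 3 5 (by decide))))
      (Ideal.mul_mem_left _ _ (hq 4 5 (by decide)))
  · intro hFm
    rw [span_gfun] at hFm
    obtain ⟨c, hc⟩ := (Submodule.mem_span_range_iff_exists_fun Rp).1 hFm
    simp only [smul_eq_mul] at hc
    have hgh : ∀ p : Fin 6 × Fin 6, (gfun M p).IsHomogeneous 2 := by
      intro p
      by_cases hp : p.1 < p.2
      · simpa only [gfun, if_pos hp] using subPf_hom M hlin p.1 p.2
      · simpa only [gfun, if_neg hp] using isHomogeneous_zero _ _ 2
    have hFsum : F = ∑ p : Fin 6 × Fin 6, homogeneousComponent 1 (c p) * gfun M p := by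
      have h3F : homogeneousComponent 3 F = F := by
        rw [homogeneousComponent_of_mem hF, if_pos rfl]
      calc F = homogeneousComponent 3 F := h3F.symm
        _ = homogeneousComponent 3 (∑ p : Fin 6 × Fin 6, c p * gfun M p) := by rw [hc]
        _ = ∑ p : Fin 6 × Fin 6, homogeneousComponent 3 (c p * gfun M p) := map_sum _ _ _
        _ = _ := Finset.sum_congr rfl fun p _ => hc_mul (c p) (gfun M p) (hgh p)
    set A : Fin 6 → Fin 6 → Rp := fun a b => homogeneousComponent 1 (c (a, b)) with hA
    have hFsum' : F = A 0 1 * subPf M 0 1 + A 0 2 * subPf M 0 2 + A 0 3 * subPf M 0 3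
        + A 0 4 * subPf M 0 4 + A 0 5 * subPf M 0 5 + A 1 2 * subPf M 1 2
        + A 1 3 * subPf M 1 3 + A 1 4 * subPf M 1 4 + A 1 5 * subPf M 1 5
        + A 2 3 * subPf M 2 3 + A 2 4 * subPf M 2 4 + A 2 5 * subPf M 2 5
        + A 3 4 * subPf M 3 4 + A 3 5 * subPf M 3 5 + A 4 5 * subPf M 4 5 := by
      rw [hFsum, Fintype.sum_prod_type]
      simp (config := { decide := true }) only [Fin.sum_univ_six, gfun, if_true, if_false]
      simp only [hA]
      ring
    refine ⟨mkM₁ A, mkM₁_skew A, mkM₁_hom A (fun a b => homogeneousComponent_isHomogeneous _ _), ?_⟩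
    rw [pfA, hpf, TrivSqZeroExt.inl_zero, zero_add, Dder_mk, ← hFsum']
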